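/- Let S be a set of positive integers, r ≥ 1 an integer, and n ≥ 0 an integer. Then D_{n,S,r} = Σ_{s∈S} (n)_s·D_{n−s,S,r} + r·Σ_{s∈S} s·(n)_{s−1}·D_{n−(s−1), S, r−1}, where (m)_j denotes the falling factorial m(m−1)⋯(m−j+1), D_{m,S,r} = 0 for m < 0, and both sums have only finitely many nonzero terms. -/

import Mathlib

open Finset
open scoped Classical

/-- The set of doubly ordered `(S,r)`-partitions of `{1,…,n+r}`: sequences of pairwise
disjoint nonempty lists of distinct elements covering everything, with lengths in `S`,
the first `r` elements in distinct lists. -/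
def srDoublySet (S : Set ℕ) (r n : ℕ) : Set (List (List (Fin (n + r)))) :=
  {L | (∀ l ∈ L, l ≠ [] ∧ l.Nodup ∧ l.length ∈ S) ∧
    L.Pairwise (fun l l' => ∀ x ∈ l, x ∉ l') ∧
    (∀ x : Fin (n + r), ∃ l ∈ L, x ∈ l) ∧
    ∀ i j : Fin (n + r), (i : ℕ) < r → (j : ℕ) < r → i ≠ j →
      ∀ l ∈ L, i ∈ l → j ∉ l}

/-- The number `D_{n,S,r}` of doubly ordered `(S,r)`-partitions. -/
noncomputable def srDoubly (S : Set ℕ) (r n : ℕ) : ℕ := Nat.card (srDoublySet S r n)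

/-- `D_{n,S,r}` with an integer argument, zero for negative arguments. -/
noncomputable def srDoublyZ (S : Set ℕ) (r : ℕ) (n : ℤ) : ℤ :=
  if 0 ≤ n then srDoubly S r n.toNat else 0

/-!
Split a doubly ordered partition into its first block `a` and the rest. The rest is a doubly
ordered partition of the complement of `a`, which has `r - k` special and `n - (|a| - k)` ordinary
elements, where `k ≤ 1` is the number of special elements of `a`; and the number of such partitions
depends only on these two numbers. A first block of length `s` either avoids the special elements,
`(n)_s` choices, or contains exactly one of them, `s · r · (n)_{s-1}` choices (its position, the
special element, and the ordinary elements in the remaining positions).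
-/

variable {α β : Type*}

def IsBlock (S : Set ℕ) (p : α → Prop) (l : List α) : Prop :=
  l ≠ [] ∧ l.Nodup ∧ l.length ∈ S ∧ ∀ i j, p i → p j → i ≠ j → i ∈ l → j ∉ l

/-- `p` marks the special elements, the paper's `1, …, r`. -/
def doublyOrderedPartitions (S : Set ℕ) (p : α → Prop) : Set (List (List α)) :=
  {L | (∀ l ∈ L, IsBlock S p l) ∧ L.Pairwise List.Disjoint ∧ ∀ x, ∃ l ∈ L, x ∈ l}

theorem srDoublySet_eq (S : Set ℕ) (r n : ℕ) :
    srDoublySet S r n = doublyOrderedPartitions S (fun i : Fin (n + r) => (i : ℕ) < r) := by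
  ext L
  simp only [srDoublySet, doublyOrderedPartitions, IsBlock, Set.mem_ofPred_eq]
  constructor
  · rintro ⟨hL, hdisj, hcover, hspecial⟩
    exact ⟨fun l hl => ⟨(hL l hl).1, (hL l hl).2.1, (hL l hl).2.2,
      fun i j hi hj hij => hspecial i j hi hj hij l hl⟩, hdisj, hcover⟩
  · rintro ⟨hL, hdisj, hcover⟩
    exact ⟨fun l hl => ⟨(hL l hl).1, (hL l hl).2.1, (hL l hl).2.2.1⟩, hdisj, hcover,
      fun i j hi hj hij l hl => (hL l hl).2.2.2 i j hi hj hij⟩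

section Relabel

variable {S : Set ℕ} {p : α → Prop} {f : β → α}

theorem isBlock_map (hf : f.Injective) {l : List β} :
    IsBlock S p (l.map f) ↔ IsBlock S (p ∘ f) l := by
  simp only [IsBlock, ne_eq, List.map_eq_nil_iff, List.nodup_map_iff hf, List.length_map,
    Function.comp, List.mem_map]
  refine and_congr_right fun _ => and_congr_right fun _ => and_congr_right fun _ => ⟨?_, ?_⟩
  · rintro h i j hi hj hij hil hjl
    exact h (f i) (f j) hi hj (hf.ne hij) ⟨i, hil, rfl⟩ ⟨j, hjl, rfl⟩
  · rintro h _ _ hi hj hij ⟨i, hil, rfl⟩ ⟨j, hjl, rfl⟩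
    exact h i j hi hj (ne_of_apply_ne f hij) hil hjl

theorem pairwise_disjoint_map (hf : f.Injective) {L : List (List β)} :
    (L.map (List.map f)).Pairwise List.Disjoint ↔ L.Pairwise List.Disjoint := by
  simp only [List.pairwise_map, List.Disjoint.map_iff hf]

theorem map_mem_doublyOrderedPartitions_iff (e : β ≃ α) {L : List (List β)} :
    L.map (List.map e) ∈ doublyOrderedPartitions S p ↔
      L ∈ doublyOrderedPartitions S (p ∘ e) := by
  simp only [doublyOrderedPartitions, Set.mem_ofPred_eq, List.forall_mem_map,
    isBlock_map e.injective, pairwise_disjoint_map e.injective]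
  refine and_congr_right fun _ => and_congr_right fun _ => ?_
  simp [e.surjective.forall]

theorem card_doublyOrderedPartitions_congr (e : β ≃ α) :
    Nat.card (doublyOrderedPartitions S (p ∘ e)) = Nat.card (doublyOrderedPartitions S p) :=
  Nat.card_congr <| (Equiv.listEquivOfEquiv (Equiv.listEquivOfEquiv e)).subtypeEquiv
    fun _ => (map_mem_doublyOrderedPartitions_iff e).symm

end Relabel

theorem card_fin_lt (n r : ℕ) : Nat.card {i : Fin (n + r) // (i : ℕ) < r} = r := by
  rw [Nat.card_eq_fintype_card, Fintype.card_fin_lt_of_le (Nat.le_add_left r n)]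

theorem card_fin_not_lt (n r : ℕ) : Nat.card {i : Fin (n + r) // ¬(i : ℕ) < r} = n := by
  rw [Nat.card_eq_fintype_card, Fintype.card_subtype_compl, Fintype.card_fin,
    ← Nat.card_eq_fintype_card, card_fin_lt, Nat.add_sub_cancel]

theorem card_doublyOrderedPartitions [Finite α] (S : Set ℕ) (p : α → Prop) :
    Nat.card (doublyOrderedPartitions S p) =
      srDoubly S (Nat.card {x // p x}) (Nat.card {x // ¬p x}) := by
  have := Fintype.ofFinite α
  set r := Nat.card {x // p x}
  set n := Nat.card {x // ¬p x}
  have e₁ : {x // p x} ≃ {i : Fin (n + r) // (i : ℕ) < r} := Fintype.equivOfCardEq <| by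
    rw [← Nat.card_eq_fintype_card, ← Nat.card_eq_fintype_card, card_fin_lt]
  have e₂ : {x // ¬p x} ≃ {i : Fin (n + r) // ¬(i : ℕ) < r} := Fintype.equivOfCardEq <| by
    rw [← Nat.card_eq_fintype_card, ← Nat.card_eq_fintype_card, card_fin_not_lt]
  let e : α ≃ Fin (n + r) := (Equiv.sumCompl p).symm.trans ((e₁.sumCongr e₂).trans
    (Equiv.sumCompl fun i : Fin (n + r) => (i : ℕ) < r))
  have hpe : p ∘ e.symm = fun i : Fin (n + r) => (i : ℕ) < r := by
    funext i
    by_cases hi : (i : ℕ) < r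
    · simpa [e, Equiv.sumCompl_symm_apply_of_pos hi, hi] using (e₁.symm ⟨i, hi⟩).2
    · simpa [e, Equiv.sumCompl_symm_apply_of_neg hi, hi] using (e₂.symm ⟨i, hi⟩).2
  rw [srDoubly, srDoublySet_eq, ← card_doublyOrderedPartitions_congr e.symm, hpe]

section FirstBlock

variable {S : Set ℕ} {p : α → Prop}

theorem nodup_of_mem_doublyOrderedPartitions {L : List (List α)}
    (hL : L ∈ doublyOrderedPartitions S p) : L.Nodup :=
  hL.2.1.imp_of_mem fun {l _} hl _ hdisj hll' => by
    subst hll'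
    obtain ⟨x, hx⟩ := List.exists_mem_of_ne_nil l (hL.1 l hl).1
    exact hdisj hx hx

noncomputable instance [Finite α] : Fintype {l : List α // IsBlock S p l} :=
  have := Fintype.ofFinite α
  Fintype.ofInjective (fun l => (⟨l.1, l.2.2.1⟩ : {l : List α // l.Nodup}))
    fun _ _ h => Subtype.ext (by simpa using h)

instance [Finite α] : Finite (doublyOrderedPartitions S p) := by
  have := Fintype.ofFinite α
  refine Set.Finite.subset (Set.finite_range
    fun M : {M : List {l : List α // l.Nodup} // M.Nodup} => M.1.map Subtype.val) ?_
  intro L hL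
  have hnodup : ∀ l ∈ L, l.Nodup := fun l hl => (hL.1 l hl).2.1
  refine ⟨⟨L.attachWith _ hnodup, ?_⟩, List.attachWith_map_subtype_val hnodup⟩
  exact List.Nodup.of_map Subtype.val
    ((List.attachWith_map_subtype_val hnodup).symm ▸ nodup_of_mem_doublyOrderedPartitions hL)

theorem cons_map_mem_doublyOrderedPartitions_iff {a : List α} {L : List (List {x // x ∉ a})} :
    a :: L.map (List.map Subtype.val) ∈ doublyOrderedPartitions S p ↔
      IsBlock S p a ∧ L ∈ doublyOrderedPartitions S (p ∘ Subtype.val) := by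
  have hdisj : ∀ l ∈ L, a.Disjoint (l.map Subtype.val) := by
    intro l _ x hxa hxl
    obtain ⟨y, -, rfl⟩ := List.mem_map.1 hxl
    exact y.2 hxa
  simp only [doublyOrderedPartitions, Set.mem_ofPred_eq, List.forall_mem_cons,
    List.forall_mem_map, isBlock_map Subtype.val_injective, List.pairwise_cons,
    pairwise_disjoint_map Subtype.val_injective, iff_true_intro hdisj, true_and, and_assoc]
  refine and_congr_right fun _ => and_congr_right fun _ => and_congr_right fun _ => ?_
  simp only [List.mem_cons, Subtype.forall]
  constructor
  · intro h x hxa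
    obtain ⟨l, rfl | hl, hxl⟩ := h x
    · exact absurd hxl hxa
    obtain ⟨l', hl', rfl⟩ := List.mem_map.1 hl
    exact ⟨l', hl', by simpa [hxa] using hxl⟩
  · intro h x
    by_cases hxa : x ∈ a
    · exact ⟨a, Or.inl rfl, hxa⟩
    obtain ⟨l, hl, hxl⟩ := h x hxa
    exact ⟨l.map Subtype.val, Or.inr (List.mem_map_of_mem hl), List.mem_map_of_mem hxl⟩

noncomputable def firstBlockEquiv [Nonempty α] :
    (Σ a : {a : List α // IsBlock S p a},
      doublyOrderedPartitions S (p ∘ (Subtype.val : {x // x ∉ a.1} → α))) ≃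
      doublyOrderedPartitions S p := by
  refine Equiv.ofBijective (fun aL => ⟨aL.1.1 :: aL.2.1.map (List.map Subtype.val),
    cons_map_mem_doublyOrderedPartitions_iff.2 ⟨aL.1.2, aL.2.2⟩⟩) ⟨?_, ?_⟩
  · rintro ⟨⟨a, ha⟩, L, hL⟩ ⟨⟨b, hb⟩, M, hM⟩ h
    simp only [Subtype.mk.injEq, List.cons.injEq] at h
    obtain ⟨rfl, h⟩ := h
    obtain rfl := List.map_injective_iff.2 (List.map_injective_iff.2 Subtype.val_injective) h
    rfl
  · rintro ⟨_ | ⟨a, T⟩, hL⟩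
    · obtain ⟨l, hl, -⟩ := hL.2.2 (Classical.arbitrary α)
      exact absurd hl List.not_mem_nil
    have hT : ∀ l ∈ T, ∀ x ∈ l, x ∉ a := fun l hl x hxl hxa =>
      (List.pairwise_cons.1 hL.2.1).1 l hl hxa hxl
    lift T to List (List {x // x ∉ a}) using hT
    obtain ⟨ha, hT⟩ := cons_map_mem_doublyOrderedPartitions_iff.1 hL
    exact ⟨⟨⟨a, ha⟩, ⟨T, hT⟩⟩, rfl⟩

theorem card_subtype_not_mem [Finite α] (q : α → Prop) [DecidablePred q] {a : List α}
    (ha : a.Nodup) : Nat.card {y : {x // x ∉ a} // q y} = Nat.card {x // q x} - a.countP q := by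
  have := Fintype.ofFinite α
  rw [Nat.card_congr (Equiv.subtypeSubtypeEquivSubtypeInter (· ∉ a) q), Nat.card_eq_fintype_card,
    Nat.card_eq_fintype_card, Fintype.card_subtype, Fintype.card_subtype,
    List.countP_eq_length_filter, ← List.toFinset_card_of_nodup (ha.filter _)]
  convert Finset.card_sdiff (s := a.toFinset) (t := {x | q x}) using 3 <;>
    ext <;> simp [and_comm]

theorem card_doublyOrderedPartitions_compl [Finite α] {a : List α} (ha : a.Nodup) :
    Nat.card (doublyOrderedPartitions S (p ∘ (Subtype.val : {x // x ∉ a} → α))) =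
      srDoubly S (Nat.card {x // p x} - a.countP p)
        (Nat.card {x // ¬p x} - (a.length - a.countP p)) := by
  have hcount := List.length_eq_countP_add_countP (p ·) (l := a)
  simp only [Bool.not_eq_true, decide_eq_false_iff_not] at hcount
  rw [card_doublyOrderedPartitions, Function.comp_def, card_subtype_not_mem p ha,
    card_subtype_not_mem (¬p ·) ha]
  congr 2
  omega

end FirstBlock

def nodupListEquivEmbedding (Q : α → Prop) (m : ℕ) :
    {l : List α // l.Nodup ∧ l.length = m ∧ ∀ x ∈ l, Q x} ≃ (Fin m ↪ {x // Q x}) where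
  toFun l := ⟨fun i => ⟨l.1[i.1]'(by rw [l.2.2.1]; exact i.2), l.2.2.2 _ (List.getElem_mem _)⟩,
    fun i j h => Fin.ext ((l.2.1.getElem_inj_iff).1 (congrArg Subtype.val h))⟩
  invFun g := ⟨List.ofFn fun i => (g i).1,
    List.nodup_ofFn.2 (Subtype.val_injective.comp g.injective), List.length_ofFn,
    List.forall_mem_ofFn_iff.2 fun i => (g i).2⟩
  left_inv l := Subtype.ext <|
    List.ext_getElem (by simp [l.2.2.1]) fun _ h _ => List.getElem_ofFn h
  right_inv g := by ext; simp

theorem card_nodup_countP_eq_zero [Finite α] (p : α → Prop) (m : ℕ) :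
    Nat.card {l : List α // l.Nodup ∧ l.length = m ∧ l.countP p = 0} =
      (Nat.card {x // ¬p x}).descFactorial m := by
  have := Fintype.ofFinite α
  rw [Nat.card_congr ((Equiv.subtypeEquivRight fun l => by simp).trans
      (nodupListEquivEmbedding (fun x => ¬p x) m)),
    Nat.card_eq_fintype_card, Fintype.card_embedding_eq, Fintype.card_fin,
    Nat.card_eq_fintype_card]

namespace List

variable {p : α → Prop} {l : List α} {x : α} {i : ℕ}

theorem findIdx_insertIdx (hi : i ≤ l.length) (hl : ∀ y ∈ l, ¬p y) (hx : p x) :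
    (l.insertIdx i x).findIdx p = i := by
  have hlen : i < (l.insertIdx i x).length := by
    rw [length_insertIdx_of_le_length hi]; omega
  rw [findIdx_eq hlen, getElem_insertIdx_self]
  refine ⟨by simpa using hx, fun j hj => ?_⟩
  rw [getElem_insertIdx_of_lt hj]
  simpa using hl _ (getElem_mem _)

theorem perm_cons_eraseIdx (hi : i < l.length) : l.Perm (l[i] :: l.eraseIdx i) := by
  conv_lhs => rw [← insertIdx_eraseIdx_getElem hi]
  exact perm_insertIdx _ _ (by rw [length_eraseIdx_of_lt hi]; omega)

end List

noncomputable def insertIdxEquiv (p : α → Prop) (m : ℕ) :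
    Fin (m + 1) × {x // p x} × {l : List α // l.Nodup ∧ l.length = m ∧ l.countP p = 0} ≃
      {l : List α // l.Nodup ∧ l.length = m + 1 ∧ l.countP p = 1} where
  toFun := fun ⟨i, x, l⟩ =>
    have hi : i ≤ l.1.length := by rw [l.2.2.1]; exact Nat.le_of_lt_succ i.2
    have hperm := List.perm_insertIdx x.1 l.1 hi
    ⟨l.1.insertIdx i x, hperm.nodup_iff.2 (List.nodup_cons.2
        ⟨fun hx => by simpa [x.2] using List.countP_eq_zero.1 l.2.2.2 _ hx, l.2.1⟩),
      by rw [List.length_insertIdx_of_le_length hi, l.2.2.1],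
      by rw [hperm.countP_eq, List.countP_cons_of_pos (by simpa using x.2), l.2.2.2]⟩
  invFun := fun l =>
    have hi : l.1.findIdx (p ·) < l.1.length :=
      List.findIdx_lt_length_of_exists (List.countP_pos_iff.1 (by rw [l.2.2.2]; exact one_pos))
    have hpi : p l.1[l.1.findIdx (p ·)] := by simpa using List.findIdx_getElem (w := hi)
    ⟨⟨l.1.findIdx (p ·), hi.trans_eq l.2.2.1⟩, ⟨_, hpi⟩, l.1.eraseIdx (l.1.findIdx (p ·)),
      l.2.1.eraseIdx _, by rw [List.length_eraseIdx_of_lt hi, l.2.2.1, Nat.add_sub_cancel],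
      by
        have := (List.perm_cons_eraseIdx hi).countP_eq (fun x => decide (p x))
        rw [List.countP_cons_of_pos (by simpa using hpi), l.2.2.2] at this
        omega⟩
  left_inv := fun ⟨i, x, l⟩ => by
    have hi : i ≤ l.1.length := by rw [l.2.2.1]; exact Nat.le_of_lt_succ i.2
    have hfind := List.findIdx_insertIdx hi (fun y hy => by
      simpa using List.countP_eq_zero.1 l.2.2.2 y hy) x.2
    ext <;> simp [hfind]
  right_inv := fun l => Subtype.ext (List.insertIdx_eraseIdx_getElem _)

theorem card_nodup_countP_eq_one [Finite α] (p : α → Prop) (m : ℕ) :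
    Nat.card {l : List α // l.Nodup ∧ l.length = m + 1 ∧ l.countP p = 1} =
      (m + 1) * Nat.card {x // p x} * (Nat.card {x // ¬p x}).descFactorial m := by
  rw [← Nat.card_congr (insertIdxEquiv p m), Nat.card_prod, Nat.card_prod, Nat.card_fin,
    card_nodup_countP_eq_zero, mul_assoc]

section BlockCount

variable {S : Set ℕ} {p : α → Prop}

theorem isBlock_iff_countP_le_one {l : List α} :
    IsBlock S p l ↔ l ≠ [] ∧ l.Nodup ∧ l.length ∈ S ∧ l.countP p ≤ 1 := by
  refine and_congr_right fun _ => and_congr_right fun hl => and_congr_right fun _ => ?_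
  rw [List.countP_eq_length_filter, ← List.toFinset_card_of_nodup (hl.filter _),
    Finset.card_le_one]
  simp only [List.mem_toFinset, List.mem_filter, decide_eq_true_eq, and_imp]
  constructor
  · intro h i hi hpi j hj hpj
    by_contra hij
    exact h i j hpi hpj hij hi hj
  · intro h i j hpi hpj hij hi hj
    exact hij (h i hi hpi j hj hpj)

theorem card_filter_isBlock [Finite α] {Q Q' : List α → Prop} [DecidablePred Q]
    (h : ∀ l, IsBlock S p l ∧ Q l ↔ Q' l) :
    #{a : {l : List α // IsBlock S p l} | Q a.1} = Nat.card {l // Q' l} := by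
  rw [← Fintype.card_subtype, ← Nat.card_eq_fintype_card]
  exact Nat.card_congr ((Equiv.subtypeSubtypeEquivSubtypeInter _ Q).trans
    (Equiv.subtypeEquivRight h))

theorem card_isBlock_countP_eq_zero [Finite α] {s : ℕ} (hs : s ∈ S) (hs₀ : 0 < s) :
    #{a : {l : List α // IsBlock S p l} | a.1.countP p = 0 ∧ a.1.length = s} =
      (Nat.card {x // ¬p x}).descFactorial s := by
  rw [card_filter_isBlock (Q := fun l : List α => l.countP p = 0 ∧ l.length = s)
    (Q' := fun l => l.Nodup ∧ l.length = s ∧ l.countP p = 0), card_nodup_countP_eq_zero]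
  intro l
  rw [isBlock_iff_countP_le_one, ← List.length_pos_iff]
  constructor
  · rintro ⟨⟨-, hnd, -, -⟩, hc, hlen⟩
    exact ⟨hnd, hlen, hc⟩
  · rintro ⟨hnd, hlen, hc⟩
    exact ⟨⟨by omega, hnd, hlen ▸ hs, by omega⟩, hc, hlen⟩

theorem card_isBlock_countP_ne_zero [Finite α] {t : ℕ} (ht : t + 1 ∈ S) :
    #{a : {l : List α // IsBlock S p l} | ¬a.1.countP p = 0 ∧ a.1.length = t + 1} =
      (t + 1) * Nat.card {x // p x} * (Nat.card {x // ¬p x}).descFactorial t := by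
  rw [card_filter_isBlock (Q := fun l : List α => ¬l.countP p = 0 ∧ l.length = t + 1)
    (Q' := fun l => l.Nodup ∧ l.length = t + 1 ∧ l.countP p = 1), card_nodup_countP_eq_one]
  intro l
  rw [isBlock_iff_countP_le_one, ← List.length_pos_iff]
  constructor
  · rintro ⟨⟨-, hnd, -, hle⟩, hc, hlen⟩
    exact ⟨hnd, hlen, by omega⟩
  · rintro ⟨hnd, hlen, hc⟩
    exact ⟨⟨by omega, hnd, hlen ▸ ht, by omega⟩, by omega, hlen⟩

end BlockCount

theorem card_doublyOrderedPartitions_eq_sum [Finite α] [Nonempty α] {S : Set ℕ}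
    (hS : ∀ s ∈ S, 0 < s) {p : α → Prop} {r n : ℕ} (hr : Nat.card {x // p x} = r)
    (hn : Nat.card {x // ¬p x} = n) :
    Nat.card (doublyOrderedPartitions S p) =
      ∑ s ∈ (range (n + r + 1)).filter (· ∈ S), n.descFactorial s * srDoubly S r (n - s) +
      r * ∑ s ∈ (range (n + r + 1)).filter (· ∈ S),
        s * n.descFactorial (s - 1) * srDoubly S (r - 1) (n - (s - 1)) := by
  have := Fintype.ofFinite α
  have hcard : Fintype.card α = n + r := by
    rw [← Nat.card_eq_fintype_card, ← Nat.card_congr (Equiv.sumCompl p), Nat.card_sum, hr, hn,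
      Nat.add_comm]
  have hlen (a : {l : List α // IsBlock S p l}) : a.1.length ∈ (range (n + r + 1)).filter (· ∈ S) :=
    Finset.mem_filter.2 ⟨Finset.mem_range.2 (Nat.lt_succ_of_le (hcard ▸ a.2.2.1.length_le_card)),
      a.2.2.2.1⟩
  rw [← Nat.card_congr firstBlockEquiv, Nat.card_sigma,
    Finset.sum_congr rfl fun a _ => card_doublyOrderedPartitions_compl a.2.2.1, hr, hn,
    ← Finset.sum_filter_add_sum_filter_not univ (fun a => a.1.countP p = 0)]
  congr 1
  · rw [Finset.sum_congr rfl fun a ha => by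
        rw [(Finset.mem_filter.1 ha).2, Nat.sub_zero, Nat.sub_zero],
      ← Finset.sum_fiberwise_of_maps_to' (fun a _ => hlen a) (fun s => srDoubly S r (n - s))]
    refine Finset.sum_congr rfl fun s hs => ?_
    have hsS := (Finset.mem_filter.1 hs).2
    rw [Finset.sum_const, smul_eq_mul, Finset.filter_filter,
      card_isBlock_countP_eq_zero hsS (hS s hsS), hn]
  · rw [Finset.sum_congr rfl fun a ha => by
        rw [show a.1.countP p = 1 by
          have := (isBlock_iff_countP_le_one.1 a.2).2.2.2
          have := (Finset.mem_filter.1 ha).2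
          omega],
      ← Finset.sum_fiberwise_of_maps_to' (fun a _ => hlen a)
        (fun s => srDoubly S (r - 1) (n - (s - 1))), Finset.mul_sum]
    refine Finset.sum_congr rfl fun s hs => ?_
    have hsS := (Finset.mem_filter.1 hs).2
    obtain ⟨t, rfl⟩ : ∃ t, s = t + 1 := ⟨s - 1, by have := hS s hsS; omega⟩
    rw [Finset.sum_const, smul_eq_mul, Finset.filter_filter, card_isBlock_countP_ne_zero hsS, hr,
      hn, Nat.add_sub_cancel]
    ring

theorem finsum_mem_eq_sum_filter_range {M : Type*} [AddCommMonoid M] {S : Set ℕ} {f : ℕ → M}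
    (N : ℕ) (hf : ∀ s ∈ S, N ≤ s → f s = 0) :
    ∑ᶠ s ∈ S, f s = ∑ s ∈ (range N).filter (· ∈ S), f s :=
  finsum_mem_eq_sum_of_subset f
    (fun s ⟨hs, hfs⟩ => Finset.mem_filter.2 ⟨Finset.mem_range.2 (Nat.lt_of_not_le
      fun hN => hfs (hf s hs hN)), hs⟩)
    (fun _ hs => (Finset.mem_filter.1 hs).2)

theorem descFactorial_mul_srDoublyZ (S : Set ℕ) (r n k : ℕ) :
    (n.descFactorial k : ℤ) * srDoublyZ S r (n - k) =
      (n.descFactorial k * srDoubly S r (n - k) : ℕ) := by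
  by_cases hk : k ≤ n
  · rw [srDoublyZ, if_pos (by omega), show ((n : ℤ) - k).toNat = n - k by omega, Nat.cast_mul]
  · rw [Nat.descFactorial_eq_zero_iff_lt.2 (by omega)]
    simp

/-- the recurrence
`D_{n,S,r} = Σ_{s∈S} (n)_s·D_{n−s,S,r} + r·Σ_{s∈S} s·(n)_{s−1}·D_{n−(s−1),S,r−1}`. -/
theorem srDoubly_recurrence (S : Set ℕ) (hS : ∀ s ∈ S, 0 < s) (r n : ℕ) (hr : 1 ≤ r) :
    (srDoubly S r n : ℤ) =
      (∑ᶠ s ∈ S, (n.descFactorial s : ℤ) * srDoublyZ S r ((n : ℤ) - s)) +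
      r * ∑ᶠ s ∈ S, (s : ℤ) * (n.descFactorial (s - 1) : ℤ) *
        srDoublyZ S (r - 1) ((n : ℤ) - ((s : ℤ) - 1)) := by
  have : Nonempty (Fin (n + r)) := ⟨⟨0, by omega⟩⟩
  have hrec := card_doublyOrderedPartitions_eq_sum hS (card_fin_lt n r) (card_fin_not_lt n r)
  rw [← srDoublySet_eq, ← srDoubly] at hrec
  have hfirst : ∑ᶠ s ∈ S, (n.descFactorial s : ℤ) * srDoublyZ S r ((n : ℤ) - s) =
      ∑ s ∈ (range (n + r + 1)).filter (· ∈ S),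
        ((n.descFactorial s * srDoubly S r (n - s) : ℕ) : ℤ) := by
    simp_rw [descFactorial_mul_srDoublyZ]
    refine finsum_mem_eq_sum_filter_range _ fun s _ hs => ?_
    rw [Nat.descFactorial_eq_zero_iff_lt.2 (by omega), zero_mul, Nat.cast_zero]
  have hsecond : ∑ᶠ s ∈ S, (s : ℤ) * (n.descFactorial (s - 1) : ℤ) *
        srDoublyZ S (r - 1) ((n : ℤ) - ((s : ℤ) - 1)) =
      ∑ s ∈ (range (n + r + 1)).filter (· ∈ S),
        ((s * n.descFactorial (s - 1) * srDoubly S (r - 1) (n - (s - 1)) : ℕ) : ℤ) := by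
    rw [finsum_mem_congr rfl fun s hs => ?_]
    · refine finsum_mem_eq_sum_filter_range _ fun s _ hs => ?_
      rw [Nat.descFactorial_eq_zero_iff_lt.2 (by omega), mul_zero, zero_mul, Nat.cast_zero]
    have := hS s hs
    rw [show (s : ℤ) - 1 = ((s - 1 : ℕ) : ℤ) by omega, mul_assoc, descFactorial_mul_srDoublyZ,
      mul_assoc, Nat.cast_mul (s : ℕ)]
  rw [hfirst, hsecond]
  exact_mod_cast hrec
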